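/- Suppose the frame drift bound Δ_J(rJ) ≤ UJ² + V_r·J·g_r + W·J holds with Δ_J(rJ) = (1/2)q((r+1)J+1)² (queue reset each frame), and ∑_{m=rJ+1}^{(r+1)J} y(m) ≤ q((r+1)J+1) with y(m) = e_L(m) - αB/(RJ). Then total energy satisfies ∑_{m=1}^{RJ} e_L(m) ≤ αB + ∑_{r=0}^{R-1} √(2(UJ² + V_r·J·g_r + W·J)). -/

import Mathlib

/-!
Since the queue is reset at the start of each frame, the frame drift is `q² / 2`, so the drift
bound caps the end-of-frame backlog by `√(2 (U J² + V_r J g_r + W J))`. The backlog dominates the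
frame's excess energy `∑ (e_L(m) - αB/(RJ))`; summing over the `R` frames, the per-slot shares
add up to exactly `αB`.
-/

open Finset

theorem le_sqrt_two_mul_of_half_mul_sq_le {x b : ℝ} (h : 1 / 2 * x ^ 2 ≤ b) : x ≤ √(2 * b) :=
  (le_abs_self x).trans (Real.abs_le_sqrt (by linarith))

theorem card_Icc_frame (r J : ℕ) : #(Icc (r * J + 1) ((r + 1) * J)) = J := by
  rw [Nat.card_Icc, add_mul, one_mul]
  omega

theorem sum_Icc_eq_sum_range_sum_Icc_frame {M : Type*} [AddCommMonoid M] (f : ℕ → M) (n J : ℕ) :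
    ∑ m ∈ Icc 1 (n * J), f m = ∑ r ∈ range n, ∑ m ∈ Icc (r * J + 1) ((r + 1) * J), f m := by
  rw [show Icc 1 (n * J) = Ioc 0 (n * J) from Icc_add_one_left_eq_Ioc 0 _]
  simp only [Icc_add_one_left_eq_Ioc]
  induction n with
  | zero => simp
  | succ n ih =>
    rw [sum_range_succ, ← ih, sum_Ioc_consecutive f (Nat.zero_le _)
      (Nat.mul_le_mul_right J n.le_succ)]

theorem sum_Icc_frame_le_of_sum_sub_le (f : ℕ → ℝ) (r J : ℕ) {c q : ℝ}
    (h : ∑ m ∈ Icc (r * J + 1) ((r + 1) * J), (f m - c) ≤ q) :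
    ∑ m ∈ Icc (r * J + 1) ((r + 1) * J), f m ≤ J * c + q := by
  rw [sum_sub_distrib, sum_const, card_Icc_frame, nsmul_eq_mul] at h
  linarith

theorem stmt16_general (R J : ℕ) (hR : 1 ≤ R) (hJ : 1 ≤ J)
    (q eL g V : ℕ → ℝ) (U W α B : ℝ)
    -- queue reset each frame: the J-slot drift equals (1/2) q((r+1)J+1)^2 and is
    -- bounded by U J^2 + V_r J g_r + W J
    (hdrift : ∀ r < R,
      (1 / 2) * q ((r + 1) * J + 1) ^ 2
        ≤ U * (J : ℝ) ^ 2 + V r * (J : ℝ) * g r + W * (J : ℝ))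
    -- accumulated energy deviation y(m) = e_L(m) - αB/(RJ) is bounded by the queue
    (hy : ∀ r < R,
      ∑ m ∈ Finset.Icc (r * J + 1) ((r + 1) * J), (eL m - α * B / ((R : ℝ) * (J : ℝ)))
        ≤ q ((r + 1) * J + 1)) :
    ∑ m ∈ Finset.Icc 1 (R * J), eL m
      ≤ α * B + ∑ r ∈ Finset.range R,
          Real.sqrt (2 * (U * (J : ℝ) ^ 2 + V r * (J : ℝ) * g r + W * (J : ℝ))) := by
  set c : ℝ := α * B / ((R : ℝ) * (J : ℝ))
  set s : ℕ → ℝ := fun r ↦ √(2 * (U * (J : ℝ) ^ 2 + V r * (J : ℝ) * g r + W * (J : ℝ)))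
  have hframe : ∀ r ∈ range R, ∑ m ∈ Icc (r * J + 1) ((r + 1) * J), eL m ≤ J * c + s r :=
    fun r hr ↦ (sum_Icc_frame_le_of_sum_sub_le eL r J (hy r (mem_range.mp hr))).trans
      (by gcongr; exact le_sqrt_two_mul_of_half_mul_sq_le (hdrift r (mem_range.mp hr)))
  have hshares : (R : ℝ) * (J * c) = α * B := by
    have hRJ : (R : ℝ) * J ≠ 0 := by positivity
    rw [← mul_assoc]
    exact mul_div_cancel₀ _ hRJ
  calc ∑ m ∈ Icc 1 (R * J), eL m
      = ∑ r ∈ range R, ∑ m ∈ Icc (r * J + 1) ((r + 1) * J), eL m :=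
        sum_Icc_eq_sum_range_sum_Icc_frame eL R J
    _ ≤ ∑ r ∈ range R, (J * c + s r) := sum_le_sum hframe
    _ = α * B + ∑ r ∈ range R, s r := by
        rw [sum_add_distrib, sum_const, card_range, nsmul_eq_mul, hshares]

theorem stmt16 (R J : ℕ) (hR : 1 ≤ R) (hJ : 1 ≤ J)
    (q eL g V : ℕ → ℝ) (U W α B : ℝ)
    (hU : 0 ≤ U) (hW : 0 ≤ W) (hV : ∀ r < R, 0 < V r) (hg : ∀ r < R, 0 ≤ g r)
    (hq : ∀ m, 0 ≤ q m) (heL : ∀ m, 0 ≤ eL m)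
    -- queue reset each frame: the J-slot drift equals (1/2) q((r+1)J+1)^2 and is
    -- bounded by U J^2 + V_r J g_r + W J
    (hdrift : ∀ r < R,
      (1 / 2) * q ((r + 1) * J + 1) ^ 2
        ≤ U * (J : ℝ) ^ 2 + V r * (J : ℝ) * g r + W * (J : ℝ))
    -- accumulated energy deviation y(m) = e_L(m) - αB/(RJ) is bounded by the queue
    (hy : ∀ r < R,
      ∑ m ∈ Finset.Icc (r * J + 1) ((r + 1) * J), (eL m - α * B / ((R : ℝ) * (J : ℝ)))
        ≤ q ((r + 1) * J + 1)) :
    ∑ m ∈ Finset.Icc 1 (R * J), eL m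
      ≤ α * B + ∑ r ∈ Finset.range R,
          Real.sqrt (2 * (U * (J : ℝ) ^ 2 + V r * (J : ℝ) * g r + W * (J : ℝ))) :=
  stmt16_general R J hR hJ q eL g V U W α B hdrift hy
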